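/- Let k ≥ 2 and define F : ℂ³ → ℂ by F(x,y,z) = conj(x)·y·(x + z^k) (the mixed function f·ḡ with f = y·(x+z^k) and g = x). Then: (i) the singular set Sing F contains the two complex lines {x = z = 0} and {x = y = 0}, so F has nonisolated singularities; and (ii) 0 is an isolated critical value of F: there exists ε > 0 such that every point p with ‖p‖ < ε at which fderiv ℝ F p is not surjective satisfies F(p) = 0. (Claims of Section 5.1: F is polar weighted-homogeneous, hence by Theorem 5.2 it has isolated critical value and Milnor tube fibration.) -/

import Mathlib

/-!
Write `F = x̄ · h` with `h = y (x + z^k)` holomorphic. Both factors vanish on the two lines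
(there `x = 0`, and `h = 0` because `k ≥ 1`), so the product rule gives `dF = 0`.
Off `F⁻¹(0)` the map `b ↦ F(x, y + b, z) = F + b · x̄ (x + z^k)` is complex affine with nonzero
slope, so already the derivative of `F` in the `y`-direction is onto `ℂ`; hence every critical
point lies in `F⁻¹(0)`.
-/

open Complex Filter Function Metric

noncomputable section

/-- `ℂ³` with its Euclidean (Hermitian) norm. -/
abbrev C3 := EuclideanSpace ℂ (Fin 3)

/-- The point `(a, b, c) ∈ ℂ³`. -/
def mk3 (a b c : ℂ) : C3 := WithLp.toLp 2 ![a, b, c]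

section ProductRule

variable {E : Type*} [NormedAddCommGroup E] [NormedSpace ℝ E]

theorem fderiv_mul_eq_zero_of_apply_eq_zero {g h : E → ℂ} {p : E}
    (hg : DifferentiableAt ℝ g p) (hh : DifferentiableAt ℝ h p) (hg0 : g p = 0) (hh0 : h p = 0) :
    fderiv ℝ (g * h) p = 0 := by
  rw [fderiv_mul hg hh, hg0, hh0]
  ext v
  simp

theorem not_surjective_fderiv_mul_of_apply_eq_zero {g h : E → ℂ} {p : E}
    (hg : DifferentiableAt ℝ g p) (hh : DifferentiableAt ℝ h p) (hg0 : g p = 0) (hh0 : h p = 0) :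
    ¬ Surjective (fderiv ℝ (g * h) p) := by
  rw [fderiv_mul_eq_zero_of_apply_eq_zero hg hh hg0 hh0]
  intro hsurj
  obtain ⟨v, hv⟩ := hsurj 1
  exact zero_ne_one hv

end ProductRule

theorem surjective_fderiv_of_hasDerivAt_line {E : Type*} [NormedAddCommGroup E]
    [NormedSpace ℂ E] {F : E → ℂ} {q e : E} {c : ℂ} (hF : DifferentiableAt ℝ F q)
    (hline : HasDerivAt (fun b : ℂ => F (q + b • e)) c 0) (hc : c ≠ 0) :
    Surjective (fderiv ℝ F q) := by
  have hA : HasFDerivAt (fun b : ℂ => q + b • e) ((ContinuousLinearMap.id ℝ ℂ).smulRight e) 0 :=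
    ((hasFDerivAt_id (0 : ℂ)).smul_const e).const_add q
  have hchain : HasFDerivAt (fun b : ℂ => F (q + b • e))
      ((fderiv ℝ F q).comp ((ContinuousLinearMap.id ℝ ℂ).smulRight e)) 0 := by
    refine HasFDerivAt.comp (0 : ℂ) ?_ hA
    rw [zero_smul, add_zero]
    exact hF.hasFDerivAt
  have hslope := hchain.unique (hline.hasFDerivAt.restrictScalars ℝ)
  intro w
  refine ⟨(w / c) • e, ?_⟩
  have := congrArg (fun L : ℂ →L[ℝ] ℂ => L (w / c)) hslope
  simp only [ContinuousLinearMap.comp_apply, ContinuousLinearMap.smulRight_apply,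
    ContinuousLinearMap.id_apply, ContinuousLinearMap.coe_restrictScalars',
    ContinuousLinearMap.toSpanSingleton_apply, smul_eq_mul] at this
  rw [this, div_mul_cancel₀ w hc]

section MixedFunction

variable (k : ℕ)

def holoFactor (q : C3) : ℂ := q 1 * (q 0 + q 2 ^ k)

def mixedF (q : C3) : ℂ := starRingEnd ℂ (q 0) * holoFactor k q

theorem mixedF_eq_mul : mixedF k = (fun q : C3 => starRingEnd ℂ (q 0)) * holoFactor k := rfl

theorem differentiableAt_holoFactor (q : C3) : DifferentiableAt ℝ (holoFactor k) q :=
  (show DifferentiableAt ℂ (holoFactor k) q by unfold holoFactor; fun_prop).restrictScalars ℝ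

theorem differentiableAt_mixedF (q : C3) : DifferentiableAt ℝ (mixedF k) q := by
  rw [mixedF_eq_mul]
  exact (by fun_prop : DifferentiableAt ℝ (fun q : C3 => starRingEnd ℂ (q 0)) q).mul
    (differentiableAt_holoFactor k q)

theorem not_surjective_fderiv_mixedF {p : C3} (hp0 : p 0 = 0) (hph : holoFactor k p = 0) :
    ¬ Surjective (fderiv ℝ (mixedF k) p) := by
  rw [mixedF_eq_mul]
  exact not_surjective_fderiv_mul_of_apply_eq_zero (by fun_prop)
    (differentiableAt_holoFactor k p) (by simp [hp0]) hph

theorem mixedF_add_smul_single_one (q : C3) (b : ℂ) :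
    mixedF k (q + b • EuclideanSpace.single 1 1) =
      mixedF k q + b * (starRingEnd ℂ (q 0) * (q 0 + q 2 ^ k)) := by
  simp only [mixedF, holoFactor, PiLp.add_apply, PiLp.smul_apply, smul_eq_mul, ne_eq,
    zero_ne_one, Fin.reduceEq, not_false_eq_true, PiLp.single_eq_of_ne, PiLp.single_eq_same,
    mul_zero, mul_one, add_zero]
  ring

theorem surjective_fderiv_mixedF {q : C3} (hq : mixedF k q ≠ 0) :
    Surjective (fderiv ℝ (mixedF k) q) := by
  have hslope : starRingEnd ℂ (q 0) * (q 0 + q 2 ^ k) ≠ 0 := by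
    intro h
    apply hq
    simp only [mixedF, holoFactor]
    linear_combination q 1 * h
  refine surjective_fderiv_of_hasDerivAt_line (e := EuclideanSpace.single 1 1)
    (differentiableAt_mixedF k q) ?_ hslope
  simp only [mixedF_add_smul_single_one]
  simpa using ((hasDerivAt_id (0 : ℂ)).mul_const _).const_add (mixedF k q)

end MixedFunction

/-- **Claims of Section 5.1.**  For `k ≥ 2`, the mixed function
`F(x,y,z) = conj(x)·y·(x + z^k)` (i.e. `f·ḡ` with `f = y·(x+z^k)`, `g = x`):
(i) has nonisolated singularities — `Sing F` contains the two complex lines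
`{x = z = 0}` and `{x = y = 0}`; and
(ii) has `0` as an isolated critical value — on some ball around the origin all critical
points of `F` lie in `F⁻¹(0)`.
(`F` is polar weighted-homogeneous, hence Theorem 5.2 applies.) -/
theorem xbar_y_x_plus_zk_isolated_critical_value_nonisolated_sing
    (k : ℕ) (hk : 2 ≤ k)
    (F : C3 → ℂ) (hF : ∀ q : C3, F q = starRingEnd ℂ (q 0) * (q 1 * (q 0 + (q 2) ^ k))) :
    (∀ y : ℂ, ¬ Surjective ⇑(fderiv ℝ F (mk3 0 y 0))) ∧
    (∀ z : ℂ, ¬ Surjective ⇑(fderiv ℝ F (mk3 0 0 z))) ∧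
    (∃ ε > (0 : ℝ), ∀ q : C3, ‖q‖ < ε → ¬ Surjective ⇑(fderiv ℝ F q) → F q = 0) := by
  obtain rfl : F = mixedF k := funext hF
  refine ⟨fun y => ?_, fun z => ?_, 1, one_pos, fun q _ hcrit => ?_⟩
  · exact not_surjective_fderiv_mixedF k (by simp [mk3])
      (by simp [mk3, holoFactor, zero_pow (by omega : k ≠ 0)])
  · exact not_surjective_fderiv_mixedF k (by simp [mk3]) (by simp [mk3, holoFactor])
  · by_contra hq
    exact hcrit (surjective_fderiv_mixedF k hq)
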